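/- arXiv:2309.16629 — 4 statements merged into one kernel-verified Lean document; each statement's English description precedes it below -/
import Mathlib

section
/- Let v : Fin m → ℝ be nonnegative weights with m ≥ 1, let ρ > 0, and let str : Fin k → Fin m → ℝ satisfy 0 ≤ str i e ≤ ρ/10 for all i, e. Define v₀ e = 1 and v_{i+1} e = v_i e · exp(str i e / ρ). If moreover for each i we have ∑_e v_i e · str i e ≤ W · ∑_e v_i e for some W ≥ 0, then for every edge e, (1/k) ∑_{i<k} str i e ≤ 2W + (ρ · log m)/k. -/
/-!
The potential `∑ e, v i e` grows by a factor at most `1 + 2W/ρ ≤ exp (2W/ρ)` per round: on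
`[0, 1/2]` the bound `exp x ≤ 1 + 2x` linearises the update, and the average-stretch hypothesis
controls the linear term. Since `v k e = exp ((∑ i, str i e) / ρ)` is a single summand of the
potential, taking logarithms gives `∑ i, str i e ≤ ρ log m + 2Wk`.
-/

open Finset Real

lemma Real.exp_le_one_add_two_mul {x : ℝ} (h₀ : 0 ≤ x) (h₁ : x ≤ 1 / 2) :
    exp x ≤ 1 + 2 * x :=
  (exp_bound_div_one_sub_of_interval h₀ (by linarith)).trans <| by
    rw [div_le_iff₀ (by linarith)]
    nlinarith

section Recurrence

variable {k : ℕ}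

lemma eq_mul_prod_of_succ_eq {M : Type*} [CommMonoid M] {a : ℕ → M} {f : Fin k → M}
    (h : ∀ i : Fin k, a (i + 1) = a i * f i) : a k = a 0 * ∏ i, f i := by
  induction k with
  | zero => simp
  | succ k ih =>
    calc a (k + 1) = a k * f (Fin.last k) := h (Fin.last k)
      _ = a 0 * ∏ i, f i := by
        rw [ih fun i => h i.castSucc, Fin.prod_univ_castSucc, mul_assoc]

lemma le_mul_pow_of_succ_le {R : Type*} [MonoidWithZero R] [PartialOrder R] [MulPosMono R]
    {a : ℕ → R} {c : R} (hc : 0 ≤ c) (h : ∀ i : Fin k, a (i + 1) ≤ a i * c) :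
    a k ≤ a 0 * c ^ k := by
  induction k with
  | zero => simp
  | succ k ih =>
    calc a (k + 1) ≤ a k * c := h (Fin.last k)
      _ ≤ a 0 * c ^ k * c := mul_le_mul_of_nonneg_right (ih fun i => h i.castSucc) hc
      _ = a 0 * c ^ (k + 1) := by rw [pow_succ, mul_assoc]

lemma pos_of_succ_eq_mul {a : ℕ → ℝ} {f : Fin k → ℝ} (h₀ : 0 < a 0) (hf : ∀ i, 0 < f i)
    (h : ∀ i : Fin k, a (i + 1) = a i * f i) : ∀ n ≤ k, 0 < a n := by
  intro n hn
  induction n with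
  | zero => exact h₀
  | succ n ih =>
    rw [h ⟨n, hn⟩]
    exact mul_pos (ih (by omega)) (hf _)

end Recurrence

lemma sum_mul_exp_div_le {ι : Type*} [Fintype ι] {ρ W : ℝ} {w s : ι → ℝ} (hρ : 0 < ρ)
    (hw : ∀ e, 0 ≤ w e) (hs₀ : ∀ e, 0 ≤ s e) (hs : ∀ e, s e ≤ ρ / 2)
    (havg : ∑ e, w e * s e ≤ W * ∑ e, w e) :
    ∑ e, w e * exp (s e / ρ) ≤ (∑ e, w e) * exp (2 * W / ρ) := by
  have hsum : 0 ≤ ∑ e, w e := sum_nonneg fun e _ => hw e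
  calc ∑ e, w e * exp (s e / ρ)
      ≤ ∑ e, w e * (1 + 2 * (s e / ρ)) := by
        refine sum_le_sum fun e _ => mul_le_mul_of_nonneg_left ?_ (hw e)
        refine exp_le_one_add_two_mul (div_nonneg (hs₀ e) hρ.le) ?_
        rw [div_le_iff₀ hρ]
        linarith [hs e]
    _ = ∑ e, w e + 2 / ρ * ∑ e, w e * s e := by
        rw [mul_sum, ← sum_add_distrib]
        exact sum_congr rfl fun e _ => by ring
    _ ≤ ∑ e, w e + 2 / ρ * (W * ∑ e, w e) := by gcongr
    _ = (∑ e, w e) * (1 + 2 * W / ρ) := by ring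
    _ ≤ (∑ e, w e) * exp (2 * W / ρ) := by
        gcongr
        linarith [add_one_le_exp (2 * W / ρ)]

theorem mwu_average_stretch_general
    (m k : ℕ) (hk : 1 ≤ k)
    (ρ W : ℝ) (hρ : 0 < ρ)
    (str : Fin k → Fin m → ℝ)
    (hstr : ∀ (i : Fin k) (e : Fin m), 0 ≤ str i e ∧ str i e ≤ ρ / 10)
    (v : ℕ → Fin m → ℝ)
    (hv0 : ∀ e, v 0 e = 1)
    (hvstep : ∀ (i : Fin k) (e : Fin m),
      v (i + 1) e = v i e * Real.exp (str i e / ρ))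
    (havg : ∀ i : Fin k, ∑ e, v i e * str i e ≤ W * ∑ e, v i e) :
    ∀ e : Fin m, (1 / (k : ℝ)) * ∑ i, str i e ≤ 2 * W + ρ * Real.log m / k := by
  intro e
  have hv_pos : ∀ n ≤ k, ∀ e, 0 < v n e := fun n hn e =>
    pos_of_succ_eq_mul (a := (v · e)) (by simp [hv0]) (fun _ => exp_pos _)
      (fun i => hvstep i e) n hn
  have hstep : ∀ i : Fin k, ∑ e, v (i + 1) e ≤ (∑ e, v i e) * exp (2 * W / ρ) := fun i => by
    simp only [hvstep]
    exact sum_mul_exp_div_le hρ (fun e => (hv_pos i i.is_lt.le e).le) (fun e => (hstr i e).1)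
      (fun e => by linarith [(hstr i e).2]) (havg i)
  have hpotential : ∑ e, v k e ≤ m * exp (2 * W / ρ) ^ k := by
    simpa [hv0] using le_mul_pow_of_succ_le (a := fun n => ∑ e, v n e) (exp_pos _).le hstep
  have hvk : v k e = exp ((∑ i, str i e) / ρ) := by
    rw [eq_mul_prod_of_succ_eq (a := (v · e)) fun i => hvstep i e, hv0, one_mul, sum_div, exp_sum]
  have hlog : (∑ i, str i e) / ρ ≤ log m + k * (2 * W / ρ) := by
    rw [← exp_le_exp, exp_add, exp_log (by exact_mod_cast e.pos), exp_nat_mul, ← hvk]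
    exact (single_le_sum (fun e _ => (hv_pos k le_rfl e).le) (mem_univ e)).trans hpotential
  have hk₀ : (0 : ℝ) < k := by exact_mod_cast hk
  rw [div_le_iff₀ hρ, add_mul, mul_assoc, div_mul_cancel₀ _ hρ.ne'] at hlog
  rw [one_div, inv_mul_le_iff₀ hk₀, mul_add, mul_div_cancel₀ _ hk₀.ne']
  linarith

/-- Multiplicative weights update for low-stretch trees: if weights start uniform,
are multiplied by `exp(str i e / ρ)` at each step, each stretch lies in `[0, ρ/10]`,
and each tree has weighted average stretch at most `W`, then for every edge the
average stretch over the `k` trees is at most `2W + ρ log m / k`. -/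
theorem mwu_average_stretch
    (m k : ℕ) (hm : 1 ≤ m) (hk : 1 ≤ k)
    (ρ W : ℝ) (hρ : 0 < ρ) (hW : 0 ≤ W)
    (str : Fin k → Fin m → ℝ)
    (hstr : ∀ (i : Fin k) (e : Fin m), 0 ≤ str i e ∧ str i e ≤ ρ / 10)
    (v : ℕ → Fin m → ℝ)
    (hv0 : ∀ e, v 0 e = 1)
    (hvstep : ∀ (i : Fin k) (e : Fin m),
      v (i + 1) e = v i e * Real.exp (str i e / ρ))
    (havg : ∀ i : Fin k, ∑ e, v i e * str i e ≤ W * ∑ e, v i e) :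
    ∀ e : Fin m, (1 / (k : ℝ)) * ∑ i, str i e ≤ 2 * W + ρ * Real.log m / k :=
  mwu_average_stretch_general m k hk ρ W hρ str hstr v hv0 hvstep havg
end

section
/- Let c be a circulation on a graph G (B_G^T c = 0), let F be a rooted spanning forest with stretch overestimates str̃_e ≥ str^{F,ℓ}_e, and define the core graph C(G,F) = G/F (contracting each component of F) with lengths ℓ^C_{ê} = str̃_e · ℓ_e. Define c^C_{ê} = c_e and w^C_{ê} = str̃_e · w_e for each edge ê of the core graph with preimage e. If (c, w) is a valid pair on G (i.e., |ℓ_e c_e| ≤ w_e entrywise), then c^C is a circulation on C(G,F), (c^C, w^C) is a valid pair with respect to lengths ℓ^C, and ‖w^C‖₁ ≤ ∑_{e ∈ E(G)} str̃_e · w_e. -/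
open Finset

/-- Passing a valid pair to the core graph.  The core graph `C(G,F) = G/F` has the
same edge set as `G`; vertices are contracted along the component map `π`.  Given
stretch overestimates `str̃ ≥ 1`, the core circulation `c^C = c` (on the contracted
graph), widths `w^C = str̃ · w` and lengths `ℓ^C = str̃ · ℓ`.  If `(c, w)` is a valid
pair on `G` then: `c` is a circulation on the contracted graph, `(c^C, w^C)` is a
valid pair for `ℓ^C`, and `‖w^C‖₁ ≤ ∑_e str̃_e · w_e`. -/
theorem valid_pair_to_core
    {V V' E : Type*} [Fintype V] [Fintype V'] [Fintype E]
    [DecidableEq V] [DecidableEq V']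
    (head tail : E → V) (π : V → V')
    (c w ℓ strTilde : E → ℝ)
    (hℓ : ∀ e, 0 < ℓ e)
    (hstr : ∀ e, 1 ≤ strTilde e)
    (hcirc : ∀ x : V,
      (∑ e, if tail e = x then c e else 0) - (∑ e, if head e = x then c e else 0) = 0)
    (hvalid : ∀ e, |ℓ e * c e| ≤ w e) :
    (∀ x' : V',
      (∑ e, if π (tail e) = x' then c e else 0)
        - (∑ e, if π (head e) = x' then c e else 0) = 0) ∧
    (∀ e, |(strTilde e * ℓ e) * c e| ≤ strTilde e * w e) ∧
    (∑ e, |strTilde e * w e| ≤ ∑ e, strTilde e * w e) := by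
  have hw : ∀ e, 0 ≤ w e := fun e => le_trans (abs_nonneg _) (hvalid e)
  have hs0 : ∀ e, 0 ≤ strTilde e := fun e => le_trans zero_le_one (hstr e)
  refine ⟨?_, ?_, ?_⟩
  · intro x'
    have key : ∀ f : E → V,
        (∑ e, if π (f e) = x' then c e else 0)
          = ∑ x ∈ univ.filter (fun x => π x = x'), ∑ e, if f e = x then c e else 0 := by
      intro f
      rw [Finset.sum_comm]
      refine Finset.sum_congr rfl fun e _ => ?_
      simp [Finset.sum_ite_eq]
    rw [key tail, key head, ← Finset.sum_sub_distrib]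
    exact Finset.sum_eq_zero fun x _ => hcirc x
  · intro e
    have := hvalid e
    calc |(strTilde e * ℓ e) * c e| = strTilde e * |ℓ e * c e| := by
          rw [mul_assoc, abs_mul, abs_of_nonneg (hs0 e)]
      _ ≤ strTilde e * w e := mul_le_mul_of_nonneg_left (hvalid e) (hs0 e)
  · refine Finset.sum_le_sum fun e _ => ?_
    rw [abs_of_nonneg (mul_nonneg (hs0 e) (hw e))]
end

section
/- Let C be a graph with lengths ℓ^C, let S ⊆ C be a subgraph, and let Π : E(C) → paths in S be an embedding mapping each edge to a path between its endpoints such that every edge ê' on the path Π(ê) satisfies ℓ^C_{ê} ≤ 2 ℓ^C_{ê'} and ℓ^C_{ê'} ≤ 2 ℓ^C_{ê}. Given a valid pair (c^C, w^C) on C, define c^S = ∑_{ê} c^C_{ê} · Π(ê) (routing each flow value along its embedding path) and w^S = 2 ∑_{ê} w^C_{ê} · |Π(ê)|. Then c^S is a circulation on S, (c^S, w^S) is a valid pair on S with lengths ℓ^C restricted to S, and ‖w^C‖₁ ≤ ‖w^S‖₁ ≤ 2·length(Π)·‖w^C‖₁ where length(Π) is the maximum number of edges on any embedding path. -/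
open Finset
open scoped Classical

/-- Passing a valid pair from a core graph `C` to a sparsified core graph `S ⊆ C`.
Edges of `C` are directed (`tail → head`); `inS` marks the edges of the subgraph `S`;
`Pi ê ê'` is the signed indicator of edge `ê'` on the embedding path of `ê`
(a path in `S` between the endpoints of `ê`, with at most `L` edges, all of whose
edges have length within a factor `2` of `ℓ ê`).  Define
`c^S = ∑_ê c_ê · Pi ê` and `w^S = 2 ∑_ê w_ê · |Pi ê|`.  Then `c^S` is a
circulation, `(c^S, w^S)` is a valid pair, and
`‖w^C‖₁ ≤ ‖w^S‖₁ ≤ 2 L ‖w^C‖₁`. -/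
theorem valid_pair_to_sparsified_core
    {V EC : Type*} [Fintype V] [Fintype EC] [DecidableEq V]
    (head tail : EC → V)
    (inS : EC → Prop)
    (Pi : EC → EC → ℝ)
    (hsupp : ∀ e e', Pi e e' ≠ 0 → inS e')
    (hsign : ∀ e e', Pi e e' = -1 ∨ Pi e e' = 0 ∨ Pi e e' = 1)
    (hpath : ∀ (e : EC) (x : V),
      (∑ e', Pi e e' *
        ((if tail e' = x then (1 : ℝ) else 0) - (if head e' = x then 1 else 0))) =
      (if tail e = x then (1 : ℝ) else 0) - (if head e = x then 1 else 0))
    (hnonempty : ∀ e, ∃ e', Pi e e' ≠ 0)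
    (L : ℕ) (hlen : ∀ e, (univ.filter fun e' => Pi e e' ≠ 0).card ≤ L)
    (ℓ c w : EC → ℝ)
    (hℓ : ∀ e, 0 < ℓ e)
    (hratio : ∀ e e', Pi e e' ≠ 0 → ℓ e ≤ 2 * ℓ e' ∧ ℓ e' ≤ 2 * ℓ e)
    (hcirc : ∀ x : V,
      (∑ e, if tail e = x then c e else 0) - (∑ e, if head e = x then c e else 0) = 0)
    (hvalid : ∀ e, |ℓ e * c e| ≤ w e) :
    (∀ x : V,
      (∑ e', if tail e' = x then (∑ e, c e * Pi e e') else 0)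
        - (∑ e', if head e' = x then (∑ e, c e * Pi e e') else 0) = 0) ∧
    (∀ e', |ℓ e' * (∑ e, c e * Pi e e')| ≤ 2 * ∑ e, w e * |Pi e e'|) ∧
    (∑ e, w e) ≤ (∑ e', 2 * ∑ e, w e * |Pi e e'|) ∧
    (∑ e', 2 * ∑ e, w e * |Pi e e'|) ≤ 2 * L * ∑ e, w e := by
  have hw : ∀ e, 0 ≤ w e := fun e => (abs_nonneg _).trans (hvalid e)
  have habs : ∀ e e', |Pi e e'| = if Pi e e' ≠ 0 then (1:ℝ) else 0 := by
    intro e e'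
    rcases hsign e e' with h|h|h <;> simp [h]
  have hswap : (∑ e', 2 * ∑ e, w e * |Pi e e'|)
      = 2 * ∑ e, w e * (∑ e', |Pi e e'|) := by
    rw [← Finset.mul_sum, Finset.sum_comm]
    congr 1
    exact Finset.sum_congr rfl fun e _ => (Finset.mul_sum _ _ _).symm
  have hS1 : ∀ e, (1:ℝ) ≤ ∑ e', |Pi e e'| := by
    intro e
    obtain ⟨e0, he0⟩ := hnonempty e
    have h1 : (1:ℝ) ≤ |Pi e e0| := by rw [habs]; simp [he0]
    calc (1:ℝ) ≤ |Pi e e0| := h1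
      _ ≤ ∑ e', |Pi e e'| :=
        Finset.single_le_sum (f := fun e' => |Pi e e'|) (fun i _ => abs_nonneg _)
          (Finset.mem_univ e0)
  have hSL : ∀ e, (∑ e', |Pi e e'|) ≤ (L:ℝ) := by
    intro e
    have : (∑ e', |Pi e e'|) = ((univ.filter fun e' => Pi e e' ≠ 0).card : ℝ) := by
      rw [Finset.sum_congr rfl fun e' _ => habs e e', Finset.sum_boole]
    rw [this]
    exact_mod_cast hlen e
  refine ⟨?_, ?_, ?_, ?_⟩
  · intro x
    have step : ∀ e' : EC, (if tail e' = x then (∑ e, c e * Pi e e') else 0)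
        - (if head e' = x then (∑ e, c e * Pi e e') else 0)
        = ∑ e, c e * (Pi e e' *
            ((if tail e' = x then (1:ℝ) else 0) - (if head e' = x then 1 else 0))) := by
      intro e'
      have : (if tail e' = x then (∑ e, c e * Pi e e') else 0)
          - (if head e' = x then (∑ e, c e * Pi e e') else 0)
          = (∑ e, c e * Pi e e') *
            ((if tail e' = x then (1:ℝ) else 0) - (if head e' = x then 1 else 0)) := by
        split_ifs <;> ring
      rw [this, Finset.sum_mul]
      exact Finset.sum_congr rfl fun e _ => by ring
    rw [← Finset.sum_sub_distrib]
    calc (∑ e', ((if tail e' = x then (∑ e, c e * Pi e e') else 0)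
            - (if head e' = x then (∑ e, c e * Pi e e') else 0)))
        = ∑ e', ∑ e, c e * (Pi e e' *
            ((if tail e' = x then (1:ℝ) else 0) - (if head e' = x then 1 else 0))) :=
          Finset.sum_congr rfl fun e' _ => step e'
      _ = ∑ e, c e * (∑ e', Pi e e' *
            ((if tail e' = x then (1:ℝ) else 0) - (if head e' = x then 1 else 0))) := by
          rw [Finset.sum_comm]
          exact Finset.sum_congr rfl fun e _ => (Finset.mul_sum _ _ _).symm
      _ = ∑ e, c e * ((if tail e = x then (1:ℝ) else 0) - (if head e = x then 1 else 0)) :=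
          Finset.sum_congr rfl fun e _ => by rw [hpath e x]
      _ = (∑ e, if tail e = x then c e else 0) - (∑ e, if head e = x then c e else 0) := by
          rw [← Finset.sum_sub_distrib]
          refine Finset.sum_congr rfl fun e _ => ?_
          split_ifs <;> ring
      _ = 0 := hcirc x
  · intro e'
    rw [Finset.mul_sum]
    calc |∑ e, ℓ e' * (c e * Pi e e')| ≤ ∑ e, |ℓ e' * (c e * Pi e e')| :=
        Finset.abs_sum_le_sum_abs _ _
      _ ≤ ∑ e, 2 * (w e * |Pi e e'|) := by
        refine Finset.sum_le_sum fun e _ => ?_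
        by_cases h : Pi e e' = 0
        · simp [h, mul_nonneg (hw e) (abs_nonneg (0:ℝ))]
        · have hle := (hratio e e' h).2
          have h1 : |Pi e e'| = 1 := by rw [habs]; simp [h]
          rw [abs_mul, abs_mul, h1, mul_one, abs_of_pos (hℓ e')]
          calc ℓ e' * |c e| ≤ (2 * ℓ e) * |c e| :=
              mul_le_mul_of_nonneg_right hle (abs_nonneg _)
            _ = 2 * |ℓ e * c e| := by rw [abs_mul, abs_of_pos (hℓ e)]; ring
            _ ≤ 2 * (w e * 1) := by have := hvalid e; linarith
      _ = 2 * ∑ e, w e * |Pi e e'| := by rw [Finset.mul_sum]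
  · rw [hswap]
    have h1 : ∀ e, w e ≤ 2 * (w e * (∑ e', |Pi e e'|)) := by
      intro e; nlinarith [hw e, hS1 e]
    have h2 : (∑ e, w e) ≤ ∑ e, 2 * (w e * (∑ e', |Pi e e'|)) :=
      Finset.sum_le_sum fun e _ => h1 e
    rwa [← Finset.mul_sum] at h2
  · rw [hswap]
    have h2 : (∑ e, w e * (∑ e', |Pi e e'|)) ≤ ∑ e, w e * (L:ℝ) :=
      Finset.sum_le_sum fun e _ => mul_le_mul_of_nonneg_left (hSL e) (hw e)
    have h3 : (∑ e, w e * (L:ℝ)) = (L:ℝ) * ∑ e, w e := by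
      rw [← Finset.sum_mul]; ring
    linarith
end

section
/- Let w^(t) denote widths at stage t with the stability property that for any edge e present at both stages t' ≤ t (and not reinserted in between), w^(t)_e ≤ 2·w^(t')_e. Let F be a forest with stretch overestimates str̃ where every edge inserted after stage repT has str̃_e = 1. Then ∑_e str̃_e · w^(t)_e ≤ 2·(∑_{e old} str̃_e · w^(repT)_e) + ‖w^(t)‖₁, where the first sum is over edges already present at stage repT. In particular if ∑_{e old} str̃_e w^(repT)_e = ŝtr·‖w^(repT)‖₁, then ∑_e str̃_e w^(t)_e ≤ 2·ŝtr·‖w^(repT)‖₁ + ‖w^(t)‖₁. -/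
open Finset

/-- Width stability through a forest level.  `Old` is the set of edges already
present at the representative stage `repT`; widths of such edges at most double
(`wt e ≤ 2 · wrep e`), and edges inserted after stage `repT` have stretch
overestimate exactly `1`.  Then
`∑_e str̃_e · wt_e ≤ 2 ∑_{e ∈ Old} str̃_e · wrep_e + ‖wt‖₁`; in particular, if
`∑_{e ∈ Old} str̃_e wrep_e = ŝtr · ‖wrep‖₁` then
`∑_e str̃_e wt_e ≤ 2 ŝtr ‖wrep‖₁ + ‖wt‖₁`. -/
theorem width_stability
    {E : Type*} [Fintype E] [DecidableEq E]
    (Old : Finset E)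
    (strTilde wt wrep : E → ℝ)
    (hstr : ∀ e, 1 ≤ strTilde e)
    (hwt : ∀ e, 0 ≤ wt e) (hwrep : ∀ e, 0 ≤ wrep e)
    (hdouble : ∀ e ∈ Old, wt e ≤ 2 * wrep e)
    (hnew : ∀ e ∉ Old, strTilde e = 1) :
    (∑ e, strTilde e * wt e ≤ 2 * (∑ e ∈ Old, strTilde e * wrep e) + ∑ e, wt e) ∧
    (∀ shat : ℝ, (∑ e ∈ Old, strTilde e * wrep e) = shat * ∑ e, wrep e →
      ∑ e, strTilde e * wt e ≤ 2 * shat * (∑ e, wrep e) + ∑ e, wt e) := by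
  have key : ∑ e, strTilde e * wt e ≤ 2 * (∑ e ∈ Old, strTilde e * wrep e) + ∑ e, wt e := by
    have hsplit : ∑ e, strTilde e * wt e =
        (∑ e ∈ Old, strTilde e * wt e) + ∑ e ∈ Oldᶜ, strTilde e * wt e :=
      (Finset.sum_add_sum_compl Old _).symm
    have h1 : ∑ e ∈ Old, strTilde e * wt e ≤ 2 * ∑ e ∈ Old, strTilde e * wrep e := by
      rw [Finset.mul_sum]
      apply Finset.sum_le_sum
      intro e he
      have := hdouble e he
      have h0 : 0 ≤ strTilde e := le_trans zero_le_one (hstr e)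
      nlinarith
    have h2 : ∑ e ∈ Oldᶜ, strTilde e * wt e ≤ ∑ e, wt e := by
      have : ∑ e ∈ Oldᶜ, strTilde e * wt e = ∑ e ∈ Oldᶜ, wt e := by
        apply Finset.sum_congr rfl
        intro e he
        rw [hnew e (Finset.mem_compl.mp he), one_mul]
      rw [this]
      exact Finset.sum_le_sum_of_subset_of_nonneg (Finset.subset_univ _)
        (fun e _ _ => hwt e)
    linarith [hsplit, h1, h2]
  exact ⟨key, fun shat h => by rw [h] at key; linarith⟩
end
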